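/- arXiv:2303.00993 — 6 statements merged into one kernel-verified Lean document; each statement's English description precedes it below -/
import Mathlib

section
/- If Γ₁ and Γ₂ are sets of nonnegative real numbers satisfying the ACC, then the product set Γ₁ · Γ₂ = {xy : x ∈ Γ₁, y ∈ Γ₂} satisfies the ACC. -/
def IsDCC (S : Set ℝ) : Prop :=
  ∀ f : ℕ → ℝ, (∀ n, f n ∈ S) → Antitone f → ∃ N, ∀ n, N ≤ n → f n = f N

def IsACC (S : Set ℝ) : Prop :=
  ∀ f : ℕ → ℝ, (∀ n, f n ∈ S) → Monotone f → ∃ N, ∀ n, N ≤ n → f n = f N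

/-!
Read in the reversed order `ℝᵒᵈ`, the ACC for a set of reals is partial well-orderedness. On
nonnegative reals multiplication is monotone in each factor, so `Γ₁ * Γ₂` is the image of the
partially well-ordered set `Γ₁ ×ˢ Γ₂` under a monotone map, hence partially well-ordered.
-/

open Set OrderDual
open scoped Pointwise

theorem Set.IsPWO.preimage_ofDual_mul_of_nonneg {α : Type*} [Mul α] [Zero α] [Preorder α]
    [PosMulMono α] [MulPosMono α] {s t : Set α} (hs : (ofDual ⁻¹' s : Set αᵒᵈ).IsPWO)
    (ht : (ofDual ⁻¹' t : Set αᵒᵈ).IsPWO) (hs₀ : ∀ x ∈ s, 0 ≤ x) (ht₀ : ∀ y ∈ t, 0 ≤ y) :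
    (ofDual ⁻¹' (s * t) : Set αᵒᵈ).IsPWO := by
  rw [← image_mul_prod]
  refine (hs.prod ht).image_of_monotoneOn ?_
  rintro ⟨x, y⟩ ⟨hx, hy⟩ ⟨x', y'⟩ ⟨hx', hy'⟩ ⟨hxx', hyy'⟩
  exact mul_le_mul (α := α) hxx' hyy' (ht₀ y' hy') (hs₀ x hx)

theorem IsACC.isPWO_dual {S : Set ℝ} (hS : IsACC S) : (ofDual ⁻¹' S : Set ℝᵒᵈ).IsPWO := by
  refine (isWF_iff_no_descending_seq.2 fun u hu hmem => ?_).isPWO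
  obtain ⟨N, hN⟩ := hS (fun n => ofDual (u n)) hmem hu.antitone
  exact (hu N.lt_succ_self).ne (hN (N + 1) N.le_succ)

theorem isACC_of_isPWO_dual {S : Set ℝ} (hS : (ofDual ⁻¹' S : Set ℝᵒᵈ).IsPWO) : IsACC S := by
  intro f hf hf_mono
  obtain ⟨g, hg⟩ := hS.exists_monotone_subseq (f := toDual ∘ f) hf
  refine ⟨g 0, fun n hn => le_antisymm ?_ (hf_mono hn)⟩
  calc f n ≤ f (g n) := hf_mono g.strictMono.le_apply
    _ ≤ f (g 0) := hg (Nat.zero_le n)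

theorem isACC_iff_isPWO_dual {S : Set ℝ} : IsACC S ↔ (ofDual ⁻¹' S : Set ℝᵒᵈ).IsPWO :=
  ⟨IsACC.isPWO_dual, isACC_of_isPWO_dual⟩

theorem acc_mul (Γ₁ Γ₂ : Set ℝ) (h1 : ∀ x ∈ Γ₁, 0 ≤ x) (h2 : ∀ x ∈ Γ₂, 0 ≤ x)
    (hA1 : IsACC Γ₁) (hA2 : IsACC Γ₂) :
    IsACC {z : ℝ | ∃ x ∈ Γ₁, ∃ y ∈ Γ₂, z = x * y} := by
  have hprod : {z : ℝ | ∃ x ∈ Γ₁, ∃ y ∈ Γ₂, z = x * y} = Γ₁ * Γ₂ := by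
    ext z
    simp only [mem_ofPred_eq, mem_mul, eq_comm]
  rw [hprod, isACC_iff_isPWO_dual]
  exact hA1.isPWO_dual.preimage_ofDual_mul_of_nonneg hA2.isPWO_dual h1 h2
end

section
/- If I and J are sets of nonnegative real numbers satisfying the DCC, then the product set I · J = {xy : x ∈ I, y ∈ J} satisfies the DCC. -/
theorem isDCC_iff_isWF {S : Set ℝ} : IsDCC S ↔ S.IsWF := by
  refine ⟨fun h => Set.isWF_iff_no_descending_seq.2 fun f hf hmem => ?_, fun h f hf hanti => ?_⟩
  · obtain ⟨N, hN⟩ := h f hmem hf.antitone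
    exact (hf N.lt_succ_self).ne (hN _ N.le_succ)
  · have hne : (Set.range f).Nonempty := Set.range_nonempty f
    have hwf : (Set.range f).IsWF := h.mono (Set.range_subset_iff.2 hf)
    obtain ⟨N, hN⟩ := hwf.min_mem hne
    refine ⟨N, fun n hn => le_antisymm (hanti hn) ?_⟩
    exact hN ▸ not_lt.1 (hwf.not_lt_min hne ⟨n, rfl⟩)

theorem Set.IsPWO.image2_mul_of_nonneg {α : Type*} [MulZeroClass α] [Preorder α]
    [PosMulMono α] [MulPosMono α] {s t : Set α} (hs : s.IsPWO) (ht : t.IsPWO)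
    (hs0 : ∀ x ∈ s, 0 ≤ x) (ht0 : ∀ y ∈ t, 0 ≤ y) : (Set.image2 (· * ·) s t).IsPWO := by
  rw [← Set.image_prod]
  refine (hs.prod ht).image_of_monotoneOn ?_
  rintro ⟨a, b⟩ ⟨-, hb⟩ ⟨c, d⟩ ⟨hc, -⟩ ⟨hac, hbd⟩
  exact mul_le_mul hac hbd (ht0 b hb) (hs0 c hc)

theorem dcc_mul (I J : Set ℝ) (hI0 : ∀ x ∈ I, 0 ≤ x) (hJ0 : ∀ x ∈ J, 0 ≤ x)
    (hI : IsDCC I) (hJ : IsDCC J) :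
    IsDCC {z : ℝ | ∃ x ∈ I, ∃ y ∈ J, z = x * y} := by
  have hIJ : {z : ℝ | ∃ x ∈ I, ∃ y ∈ J, z = x * y} = Set.image2 (· * ·) I J := by
    ext z
    simp only [Set.mem_ofPred_eq, Set.mem_image2, eq_comm]
  rw [hIJ, isDCC_iff_isWF, ← Set.isPWO_iff_isWF]
  rw [isDCC_iff_isWF, ← Set.isPWO_iff_isWF] at hI hJ
  exact hI.image2_mul_of_nonneg hJ hI0 hJ0
end

section
/- If I ⊆ [0, ∞) satisfies the DCC and 0 is not an accumulation point of I \ {0}, then the set I₊ = {0} ∪ {Σ_{k=1}^l i_k ∈ [0,1] : l ≥ 1, i_k ∈ I} satisfies the DCC. -/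
def IPlus (I : Set ℝ) : Set ℝ :=
  {0} ∪ {s : ℝ | ∃ l : ℕ, 1 ≤ l ∧ ∃ i : Fin l → ℝ, (∀ k, i k ∈ I) ∧
    s = ∑ k, i k ∧ 0 ≤ s ∧ s ≤ 1}

theorem IsDCC.mono {S T : Set ℝ} (hT : IsDCC T) (hST : S ⊆ T) : IsDCC S :=
  isDCC_iff_isWF.2 ((isDCC_iff_isWF.1 hT).mono hST)

theorem IsDCC.addSubmonoid_closure {I : Set ℝ} (hI0 : I ⊆ Set.Ici 0) (hI : IsDCC I) :
    IsDCC (AddSubmonoid.closure I) :=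
  isDCC_iff_isWF.2 ((isDCC_iff_isWF.1 hI).isPWO.addSubmonoid_closure hI0).isWF

theorem iPlus_subset_addSubmonoid_closure (I : Set ℝ) :
    IPlus I ⊆ AddSubmonoid.closure I := by
  rintro s (rfl | ⟨l, -, i, hiI, rfl, -⟩)
  · exact zero_mem _
  · exact sum_mem fun k _ => AddSubmonoid.subset_closure (hiI k)

theorem dcc_iplus_general (I : Set ℝ) (hI0 : I ⊆ Set.Ici 0) (hI : IsDCC I) : IsDCC (IPlus I) :=
  (hI.addSubmonoid_closure hI0).mono (iPlus_subset_addSubmonoid_closure I)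

theorem dcc_iplus (I : Set ℝ) (hI0 : I ⊆ Set.Ici 0) (hI : IsDCC I)
    (h0 : ¬ AccPt (0 : ℝ) (Filter.principal (I \ {0}))) : IsDCC (IPlus I) :=
  dcc_iplus_general I hI0 hI
end

section
/- If I ⊆ [0, ∞) is a set such that I₊ satisfies the DCC, then the set D(I) = {a ≤ 1 : a = (m − 1 + f)/m for some positive integer m and some f ∈ I₊} satisfies the DCC. -/
def DSet (I : Set ℝ) : Set ℝ :=
  {a : ℝ | a ≤ 1 ∧ ∃ m : ℕ, 0 < m ∧ ∃ f ∈ IPlus I, a = (m - 1 + f) / m}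

theorem Set.IsWF.of_forall_lt_isWF_inter_Iic {α : Type*} [LinearOrder α] {S : Set α} {b : α}
    (hS : S ⊆ Set.Iic b) (h : ∀ c < b, (S ∩ Set.Iic c).IsWF) : S.IsWF := by
  rw [Set.isWF_iff_no_descending_seq]
  intro f hf hmem
  have hlt : f 1 < b := (hf zero_lt_one).trans_le (hS (hmem 0))
  refine (Set.isWF_iff_no_descending_seq.1 (h _ hlt)) (fun n => f (n + 1))
    (fun i j hij => hf (by omega)) fun n => ⟨hmem _, hf.antitone (by omega)⟩

theorem nonneg_of_mem_IPlus {I : Set ℝ} {x : ℝ} (hx : x ∈ IPlus I) : 0 ≤ x := by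
  rcases hx with rfl | ⟨_, _, _, _, _, hx, _⟩
  · exact le_rfl
  · exact hx

noncomputable def dMap (m : ℕ) (f : ℝ) : ℝ := (m - 1 + f) / m

theorem monotone_dMap (m : ℕ) : Monotone (dMap m) := fun x y hxy =>
  div_le_div_of_nonneg_right (by linarith) m.cast_nonneg

theorem le_ceil_of_dMap_le {m : ℕ} {f c : ℝ} (hm : 0 < m) (hf : 0 ≤ f) (hle : dMap m f ≤ c)
    (hc : c < 1) : m ≤ ⌈(1 - c)⁻¹⌉₊ := by
  have hm' : (0 : ℝ) < m := Nat.cast_pos.2 hm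
  have hlower : 1 - 1 / (m : ℝ) ≤ dMap m f := by
    rw [dMap, one_sub_div hm'.ne']
    exact div_le_div_of_nonneg_right (by linarith) hm'.le
  have hmc : (m : ℝ) ≤ (1 - c)⁻¹ := by
    rw [le_inv_comm₀ hm' (by linarith), ← one_div]
    linarith
  exact_mod_cast hmc.trans (Nat.le_ceil _)

theorem DSet_inter_Iic_subset {I : Set ℝ} {c : ℝ} (hc : c < 1) :
    DSet I ∩ Set.Iic c ⊆ ⋃ m ∈ Finset.Icc 1 ⌈(1 - c)⁻¹⌉₊, dMap m '' IPlus I := by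
  rintro _ ⟨⟨-, m, hm, f, hf, rfl⟩, hle⟩
  have hbound := le_ceil_of_dMap_le hm (nonneg_of_mem_IPlus hf) hle hc
  exact Set.mem_biUnion (Finset.mem_Icc.2 ⟨hm, hbound⟩) ⟨f, hf, rfl⟩

theorem isWF_DSet {I : Set ℝ} (hI : (IPlus I).IsWF) : (DSet I).IsWF := by
  refine Set.IsWF.of_forall_lt_isWF_inter_Iic (b := 1) (fun a ha => ha.1) fun c hc => ?_
  refine ((Finset.isWF_bUnion _).2 fun m _ => ?_).mono (DSet_inter_Iic_subset hc)
  exact (hI.isPWO.image_of_monotone (monotone_dMap m)).isWF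

theorem dcc_DSet_general (I : Set ℝ) (hI : IsDCC (IPlus I)) :
    IsDCC (DSet I) :=
  isDCC_iff_isWF.2 (isWF_DSet (isDCC_iff_isWF.1 hI))

theorem dcc_DSet (I : Set ℝ) (hI0 : I ⊆ Set.Ici 0) (hI : IsDCC (IPlus I)) :
    IsDCC (DSet I) :=
  dcc_DSet_general I hI
end

section
/- If Λ⁰ is a finite set of real numbers, G is a DCC set of nonnegative reals, and V is a DCC set of positive reals, then there is no strictly increasing sequence (t_i) of positive reals together with g_i ∈ G and v_i ∈ V such that g_i + t_i v_i ∈ Λ⁰ for all i. -/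
/-! The triples `(gᵢ + tᵢ vᵢ, vᵢ, gᵢ)` lie in `Λ₀ × V × G`, which is partially well-ordered for
equality on the finite `Λ₀` and `≤` on the two DCC sets. So there are `m < n` with
`gₘ + tₘ vₘ = gₙ + tₙ vₙ`, `vₘ ≤ vₙ` and `gₘ ≤ gₙ`; as `tₘ < tₙ`, the left side is strictly smaller. -/

theorem IsDCC.isWF {S : Set ℝ} (hS : IsDCC S) : S.IsWF := by
  rw [Set.isWF_iff_no_descending_seq]
  intro f hf hmem
  obtain ⟨N, hN⟩ := hS f hmem hf.antitone
  exact (hf N.lt_succ_self).ne (hN (N + 1) N.le_succ)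

theorem add_mul_lt_add_mul_of_lt_of_le {α : Type*} [Semiring α] [PartialOrder α]
    [IsStrictOrderedRing α] {g₁ g₂ t₁ t₂ v₁ v₂ : α} (ht₁ : 0 ≤ t₁) (hv₂ : 0 < v₂)
    (ht : t₁ < t₂) (hv : v₁ ≤ v₂) (hg : g₁ ≤ g₂) : g₁ + t₁ * v₁ < g₂ + t₂ * v₂ :=
  add_lt_add_of_le_of_lt hg <| calc
    t₁ * v₁ ≤ t₁ * v₂ := mul_le_mul_of_nonneg_left hv ht₁
    _ < t₂ * v₂ := mul_lt_mul_of_pos_right ht hv₂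

theorem no_strict_mono_affine_general (Λ₀ : Set ℝ) (hΛ₀ : Λ₀.Finite)
    (G : Set ℝ) (hG : IsDCC G)
    (V : Set ℝ) (hVpos : ∀ x ∈ V, 0 < x) (hV : IsDCC V) :
    ¬ ∃ (t : ℕ → ℝ) (g v : ℕ → ℝ), StrictMono t ∧ (∀ i, 0 < t i) ∧
      (∀ i, g i ∈ G) ∧ (∀ i, v i ∈ V) ∧ (∀ i, g i + t i * v i ∈ Λ₀) := by
  rintro ⟨t, g, v, ht, htpos, hg, hv, hΛ⟩
  have hpwo : (Λ₀ ×ˢ (V ×ˢ G)).PartiallyWellOrderedOn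
      fun a b : ℝ × ℝ × ℝ => a.1 = b.1 ∧ a.2 ≤ b.2 :=
    hΛ₀.partiallyWellOrderedOn.prod (hV.isWF.isPWO.prod hG.isWF.isPWO)
  obtain ⟨m, n, hmn, hlam, hv', hg'⟩ :=
    hpwo.exists_lt (f := fun i => (g i + t i * v i, v i, g i)) fun i => ⟨hΛ i, hv i, hg i⟩
  exact hlam.not_lt <| add_mul_lt_add_mul_of_lt_of_le (htpos m).le (hVpos _ (hv n)) (ht hmn) hv' hg'

theorem no_strict_mono_affine (Λ₀ : Set ℝ) (hΛ₀ : Λ₀.Finite)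
    (G : Set ℝ) (hG0 : ∀ x ∈ G, 0 ≤ x) (hG : IsDCC G)
    (V : Set ℝ) (hVpos : ∀ x ∈ V, 0 < x) (hV : IsDCC V) :
    ¬ ∃ (t : ℕ → ℝ) (g v : ℕ → ℝ), StrictMono t ∧ (∀ i, 0 < t i) ∧
      (∀ i, g i ∈ G) ∧ (∀ i, v i ∈ V) ∧ (∀ i, g i + t i * v i ∈ Λ₀) :=
  no_strict_mono_affine_general Λ₀ hΛ₀ G hG V hVpos hV
end

section
/- Let Λ ⊆ ℝ be a set of nonnegative reals satisfying the DCC, and suppose (t_i), (λ_i), (λ'_i) are sequences with t_i > 0, λ_i ∈ Λ with λ_i > 0, λ'_i ∈ Λ ∩ [0,1], and 1 − t_i λ_i = λ'_i for all i. Then the set {t_i : i ∈ ℕ} satisfies the ACC; in particular the sequence (t_i) cannot be strictly increasing. -/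
theorem isACC_of_forall_not_strictMono {S : Set ℝ}
    (hS : ∀ f : ℕ → ℝ, StrictMono f → ¬ ∀ n, f n ∈ S) : IsACC S := by
  intro f hfS hf
  have : WellFoundedGT S := by
    rw [WellFoundedGT, isWellFounded_iff, RelEmbedding.wellFounded_iff_isEmpty]
    exact ⟨fun a => hS (fun n => a n)
      (strictMono_nat_of_lt_succ fun n => a.map_rel_iff.2 n.lt_succ_self) (fun n => (a n).2)⟩
  obtain ⟨N, hN⟩ := WellFoundedGT.monotone_chain_condition
    (⟨fun n => (⟨f n, hfS n⟩ : S), fun _ _ h => hf h⟩ : ℕ →o S)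
  exact ⟨N, fun n hn => (congrArg Subtype.val (hN n hn)).symm⟩

theorem not_forall_mem_of_strictMono_of_one_sub_mul_eq {Λ : Set ℝ} (hΛ : Λ.IsPWO)
    {t l l' : ℕ → ℝ} (ht : ∀ i, 0 < t i) (hl : ∀ i, l i ∈ Λ) (hlpos : ∀ i, 0 < l i)
    (hl' : ∀ i, l' i ∈ Λ) (heq : ∀ i, 1 - t i * l i = l' i)
    {s : ℕ → ℝ} (hs : StrictMono s) : ¬ ∀ k, s k ∈ {x : ℝ | ∃ i, x = t i} := by
  intro hst
  choose g hg using hst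
  obtain ⟨m, n, hmn, hle⟩ := (hΛ.prod hΛ).exists_lt
    (f := fun k => (l (g k), l' (g k))) fun k => ⟨hl _, hl' _⟩
  obtain ⟨hlle, hl'le⟩ := Prod.mk_le_mk.1 hle
  have htlt : t (g m) < t (g n) := by rw [← hg, ← hg]; exact hs hmn
  have hmul : t (g m) * l (g m) < t (g n) * l (g n) :=
    calc t (g m) * l (g m) < t (g n) * l (g m) := mul_lt_mul_of_pos_right htlt (hlpos _)
      _ ≤ t (g n) * l (g n) := mul_le_mul_of_nonneg_left hlle (ht _).le
  linarith [heq (g m), heq (g n)]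

theorem acc_codim_one_general (Λ : Set ℝ) (hΛ : IsDCC Λ)
    (t l : ℕ → ℝ) (l' : ℕ → ℝ)
    (htpos : ∀ i, 0 < t i)
    (hl : ∀ i, l i ∈ Λ) (hlpos : ∀ i, 0 < l i)
    (hl' : ∀ i, l' i ∈ Λ ∩ Set.Icc 0 1)
    (heq : ∀ i, 1 - t i * l i = l' i) :
    IsACC {x : ℝ | ∃ i : ℕ, x = t i} ∧ ¬ StrictMono t := by
  have hno : ∀ s : ℕ → ℝ, StrictMono s → ¬ ∀ k, s k ∈ {x : ℝ | ∃ i, x = t i} :=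
    fun _ hs => not_forall_mem_of_strictMono_of_one_sub_mul_eq hΛ.isWF.isPWO htpos hl hlpos
      (fun i => (hl' i).1) heq hs
  exact ⟨isACC_of_forall_not_strictMono hno, fun ht => hno t ht fun k => ⟨k, rfl⟩⟩

theorem acc_codim_one (Λ : Set ℝ) (hΛ0 : ∀ x ∈ Λ, 0 ≤ x) (hΛ : IsDCC Λ)
    (t l : ℕ → ℝ) (l' : ℕ → ℝ)
    (htpos : ∀ i, 0 < t i)
    (hl : ∀ i, l i ∈ Λ) (hlpos : ∀ i, 0 < l i)
    (hl' : ∀ i, l' i ∈ Λ ∩ Set.Icc 0 1)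
    (heq : ∀ i, 1 - t i * l i = l' i) :
    IsACC {x : ℝ | ∃ i : ℕ, x = t i} ∧ ¬ StrictMono t :=
  acc_codim_one_general Λ hΛ t l l' htpos hl hlpos hl' heq
end
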